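/- Let δ > 0. There exists a constant C > 0 such that for every real b with 0 < b < 1 and every fixed h > 0, ∫_{-∞}^{+∞} e^{-h|x|}(1+|x|)/|1 − b·e^{ix}|^{1+δ} dx ≤ C/(1−b)^{δ}. -/

import Mathlib

/-!
On the unit circle `‖1 - b e^{ix}‖ ≥ max (1 - b, |sin x| / 2)`, and
`e^{-h|x|} (1 + |x|) ≤ (1 + 2/h) e^{-h|x|/2}`, so the integral is bounded by a constant times
`∫ e^{-c|x|} m(x) dx`, where `m(x) = max (1 - b, |sin x| / 2) ^ (-(1 + δ))` is `π`-periodic.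
Summing over periods, this is at most a convergent geometric series times `∫₀^π m`. By Jordan's
inequality, `m(x) ≤ 8^{1+δ} ((1 - b + x)^{-(1+δ)} + (1 - b + π - x)^{-(1+δ)})` on `[0, π]`,
and the integral of the right-hand side is `O((1 - b)^{-δ})`.
-/

open MeasureTheory Real Set Function

lemma integrable_exp_neg_abs : Integrable fun x : ℝ => exp (-|x|) := by
  rw [← integrableOn_univ, ← Iic_union_Ioi (a := (0 : ℝ))]
  refine ((integrableOn_exp_Iic 0).congr_fun (fun x hx => ?_) measurableSet_Iic).union
    ((integrableOn_exp_neg_Ioi 0).congr_fun (fun x hx => ?_) measurableSet_Ioi)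
  · simp [abs_of_nonpos (mem_Iic.1 hx)]
  · simp [abs_of_pos (mem_Ioi.1 hx)]

lemma integrable_exp_neg_mul_abs {c : ℝ} (hc : 0 < c) :
    Integrable fun x : ℝ => exp (-(c * |x|)) := by
  simpa [abs_mul, abs_of_pos hc] using integrable_exp_neg_abs.comp_mul_left' hc.ne'

lemma summable_exp_neg_mul_abs_int {c : ℝ} (hc : 0 < c) :
    Summable fun k : ℤ => exp (-(c * |(k : ℝ)|)) := by
  have hnat : Summable fun n : ℕ => exp (n * -c) := summable_exp_nat_mul_iff.2 (by linarith)
  refine .of_nat_of_neg ?_ ?_ <;> simpa [mul_comm] using hnat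

lemma one_le_tsum_exp_neg_mul_abs_int {c : ℝ} (hc : 0 < c) :
    1 ≤ ∑' k : ℤ, exp (-(c * |(k : ℝ)|)) := by
  simpa using (summable_exp_neg_mul_abs_int hc).le_tsum 0 fun _ _ => (exp_pos _).le

lemma abs_int_mul_sub_le_abs {T x : ℝ} {k : ℤ} (hx : x ∈ Ioc (k * T) ((k + 1) * T)) :
    |(k : ℝ)| * T - T ≤ |x| := by
  obtain ⟨hlo, hhi⟩ := hx
  rw [add_one_mul] at hhi
  have := abs_sub_abs_le_abs_sub ((k : ℝ) * T) x
  rw [abs_mul, abs_of_nonneg (a := T) (by linarith), abs_sub_comm,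
    abs_of_pos (a := x - k * T) (by linarith)] at this
  linarith

namespace Function.Periodic

variable {f : ℝ → ℝ} {T c : ℝ}

lemma integrable_exp_neg_mul_abs_mul (hf : Periodic f T) (hT : 0 < T) (hc : 0 < c)
    (hfc : Continuous f) : Integrable fun x => exp (-(c * |x|)) * f x := by
  obtain ⟨M, hM⟩ := (Metric.isBounded_iff_subset_closedBall 0).1
    (hf.isBounded_of_continuous hT.ne' hfc)
  refine (integrable_exp_neg_mul_abs hc).mul_bdd (c := M) hfc.aestronglyMeasurable
    (Filter.Eventually.of_forall fun x => ?_)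
  simpa using hM (mem_range_self x)

/-- On the period `(kT, (k+1)T]` the weight `exp (-c|x|)` is at most `exp (cT) exp (-cT|k|)`. -/
lemma integral_exp_neg_mul_abs_mul_le (hf : Periodic f T) (hT : 0 < T) (hc : 0 < c)
    (hfc : Continuous f) (hf0 : 0 ≤ f) :
    ∫ x, exp (-(c * |x|)) * f x
      ≤ exp (c * T) * (∑' k : ℤ, exp (-(c * T * |(k : ℝ)|))) * ∫ x in 0..T, f x := by
  set s : ℤ → Set ℝ := fun k => Ioc (k * T) ((k + 1) * T)
  have hcover : ⋃ k, s k = univ := by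
    simpa [s, zsmul_eq_mul] using iUnion_Ioc_add_zsmul hT 0
  have hdisj : Pairwise (onFun Disjoint s) := by
    simpa [s, zsmul_eq_mul] using pairwise_disjoint_Ioc_add_zsmul (0 : ℝ) T
  have hsum := hasSum_integral_iUnion (fun k => measurableSet_Ioc) hdisj
    ((hf.integrable_exp_neg_mul_abs_mul hT hc hfc).integrableOn (s := ⋃ k, s k))
  rw [hcover, setIntegral_univ] at hsum
  have hperiod : ∀ k : ℤ, ∫ x in s k, f x = ∫ x in 0..T, f x := fun k => by
    rw [show s k = Ioc (k * T) (k * T + T) by simp only [s, add_one_mul],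
      ← intervalIntegral.integral_of_le (by linarith), hf.intervalIntegral_add_eq (k * T) 0,
      zero_add]
  have hpiece : ∀ k : ℤ, ∫ x in s k, exp (-(c * |x|)) * f x
      ≤ exp (c * T) * exp (-(c * T * |(k : ℝ)|)) * ∫ x in 0..T, f x := fun k => by
    rw [← hperiod, ← integral_const_mul]
    refine setIntegral_mono_on (hf.integrable_exp_neg_mul_abs_mul hT hc hfc).integrableOn
      ((continuous_const.mul hfc).integrableOn_Ioc) measurableSet_Ioc fun x hx => ?_
    refine mul_le_mul_of_nonneg_right ?_ (hf0 x)
    rw [← exp_add, exp_le_exp]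
    nlinarith [abs_int_mul_sub_le_abs hx]
  calc ∫ x, exp (-(c * |x|)) * f x
      ≤ ∑' k : ℤ, exp (c * T) * exp (-(c * T * |(k : ℝ)|)) * ∫ x in 0..T, f x :=
        hsum.tsum_eq ▸ hsum.summable.tsum_le_tsum hpiece
          (((summable_exp_neg_mul_abs_int (mul_pos hc hT)).mul_left _).mul_right _)
    _ = _ := by rw [tsum_mul_right, tsum_mul_left]

end Function.Periodic

lemma periodic_max_abs_sin_rpow (a p : ℝ) : Periodic (fun x => max a (|sin x| / 2) ^ p) π := by
  intro x
  simp only [sin_add_pi, abs_neg]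

lemma continuous_max_abs_sin_rpow {a : ℝ} (ha : 0 < a) (p : ℝ) :
    Continuous fun x => max a (|sin x| / 2) ^ p :=
  (continuous_const.max (continuous_sin.abs.div_const 2)).rpow_const
    fun _ => Or.inl (lt_max_of_lt_left ha).ne'

lemma add_div_eight_le_max_abs_sin {a : ℝ} (ha : 0 ≤ a) {y : ℝ} (hy : y ∈ Icc 0 (π / 2)) :
    (a + y) / 8 ≤ max a (|sin y| / 2) := by
  have hjordan : 2 / π * y ≤ sin y := mul_le_sin hy.1 hy.2
  have hy2 : y / 2 ≤ 2 / π * y := by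
    rw [div_mul_eq_mul_div, le_div_iff₀ pi_pos]
    nlinarith [pi_le_four, hy.1]
  linarith [le_max_left a (|sin y| / 2), le_max_right a (|sin y| / 2), le_abs_self (sin y)]

lemma max_abs_sin_rpow_neg_le {a p x : ℝ} (ha : 0 < a) (hp : 0 ≤ p) (hx : x ∈ Icc 0 π) :
    max a (|sin x| / 2) ^ (-p) ≤ 8 ^ p * ((a + x) ^ (-p) + (a + (π - x)) ^ (-p)) := by
  have hhalf : ∀ y ∈ Icc 0 (π / 2), max a (|sin y| / 2) ^ (-p) ≤ 8 ^ p * (a + y) ^ (-p) := by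
    intro y hy
    calc max a (|sin y| / 2) ^ (-p) ≤ ((a + y) / 8) ^ (-p) :=
          rpow_le_rpow_of_nonpos (by linarith [hy.1]) (add_div_eight_le_max_abs_sin ha.le hy)
            (by linarith)
      _ = 8 ^ p * (a + y) ^ (-p) := by
          rw [div_rpow (by linarith [hy.1]) (by norm_num), rpow_neg (by norm_num : (0 : ℝ) ≤ 8),
            div_inv_eq_mul, mul_comm]
  have h8 : (0 : ℝ) ≤ 8 ^ p := by positivity
  rcases le_total x (π / 2) with h | h
  · have := hhalf x ⟨hx.1, h⟩
    have : 0 ≤ (a + (π - x)) ^ (-p) := rpow_nonneg (by linarith [hx.2]) _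
    nlinarith
  · have := hhalf (π - x) ⟨by linarith [hx.2], by linarith⟩
    rw [sin_pi_sub] at this
    have : 0 ≤ (a + x) ^ (-p) := rpow_nonneg (by linarith [hx.1]) _
    nlinarith

lemma integral_add_rpow_neg_one_add_le {a δ L : ℝ} (ha : 0 < a) (hδ : 0 < δ) (hL : 0 ≤ L) :
    ∫ x in 0..L, (a + x) ^ (-(1 + δ)) ≤ a ^ (-δ) / δ := by
  rw [intervalIntegral.integral_comp_add_left (fun y => y ^ (-(1 + δ))), add_zero,
    integral_rpow (Or.inr ⟨by linarith, fun h => by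
      rw [uIcc_of_le (by linarith)] at h; linarith [h.1]⟩)]
  have : 0 ≤ (a + L) ^ (-δ) := rpow_nonneg (by linarith) _
  rw [show -(1 + δ) + 1 = -δ by ring, div_neg, ← neg_div, neg_sub]
  gcongr
  linarith

lemma integral_max_abs_sin_rpow_le {a δ : ℝ} (ha : 0 < a) (hδ : 0 < δ) :
    ∫ x in 0..π, max a (|sin x| / 2) ^ (-(1 + δ)) ≤ 2 * 8 ^ (1 + δ) / δ * a ^ (-δ) := by
  set ψ : ℝ → ℝ := fun x => (a + x) ^ (-(1 + δ))
  have hψ : ContinuousOn ψ (Icc 0 π) :=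
    ContinuousOn.rpow_const (f := fun x => a + x) (by fun_prop) fun x hx =>
      Or.inl (by linarith [hx.1])
  have hψ_int : IntervalIntegrable ψ volume 0 π :=
    (hψ.mono (uIcc_of_le pi_pos.le).subset).intervalIntegrable
  have hψ_refl_int : IntervalIntegrable (fun x => ψ (π - x)) volume 0 π := by
    simpa using (hψ_int.comp_sub_left π).symm
  calc ∫ x in 0..π, max a (|sin x| / 2) ^ (-(1 + δ))
      ≤ ∫ x in 0..π, 8 ^ (1 + δ) * (ψ x + ψ (π - x)) :=
        intervalIntegral.integral_mono_on pi_pos.le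
          ((continuous_max_abs_sin_rpow ha _).intervalIntegrable _ _)
          ((hψ_int.add hψ_refl_int).const_mul _)
          fun x hx => max_abs_sin_rpow_neg_le ha (by linarith) hx
    _ = 2 * 8 ^ (1 + δ) * ∫ x in 0..π, ψ x := by
        rw [intervalIntegral.integral_const_mul, intervalIntegral.integral_add hψ_int hψ_refl_int,
          intervalIntegral.integral_comp_sub_left ψ π, sub_self, sub_zero]
        ring
    _ ≤ 2 * 8 ^ (1 + δ) * (a ^ (-δ) / δ) := by
        gcongr
        exact integral_add_rpow_neg_one_add_le ha hδ pi_pos.le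
    _ = 2 * 8 ^ (1 + δ) / δ * a ^ (-δ) := by ring

lemma one_sub_abs_le_norm_one_sub_mul_exp (b x : ℝ) :
    1 - |b| ≤ ‖1 - (b : ℂ) * Complex.exp (Complex.I * x)‖ := by
  have hnorm : ‖(b : ℂ) * Complex.exp (Complex.I * x)‖ = |b| := by
    rw [norm_mul, mul_comm Complex.I, Complex.norm_exp_ofReal_mul_I, mul_one, Complex.norm_real,
      norm_eq_abs]
  simpa [hnorm] using norm_sub_norm_le (1 : ℂ) ((b : ℂ) * Complex.exp (Complex.I * x))

lemma abs_mul_abs_sin_le_norm_one_sub_mul_exp (b x : ℝ) :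
    |b| * |sin x| ≤ ‖1 - (b : ℂ) * Complex.exp (Complex.I * x)‖ := by
  have him : (1 - (b : ℂ) * Complex.exp (Complex.I * x)).im = -(b * sin x) := by
    rw [mul_comm Complex.I, Complex.exp_mul_I]
    simp [← Complex.ofReal_cos, ← Complex.ofReal_sin]
  simpa [him, abs_mul] using Complex.abs_im_le_norm (1 - (b : ℂ) * Complex.exp (Complex.I * x))

/-- For `b ≥ 1/2` the second bound gives `|sin x| / 2`; for `b < 1/2` the first one exceeds it. -/
lemma max_abs_sin_le_norm_one_sub_mul_exp {b : ℝ} (hb0 : 0 ≤ b) (x : ℝ) :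
    max (1 - b) (|sin x| / 2) ≤ ‖1 - (b : ℂ) * Complex.exp (Complex.I * x)‖ := by
  have h1 := one_sub_abs_le_norm_one_sub_mul_exp b x
  have h2 := abs_mul_abs_sin_le_norm_one_sub_mul_exp b x
  rw [abs_of_nonneg hb0] at h1 h2
  refine max_le h1 ?_
  rcases le_total (1 / 2) b with hb | hb
  · nlinarith [abs_nonneg (sin x)]
  · linarith [abs_sin_le_one x]

lemma one_add_le_mul_exp {c t : ℝ} (hc : 0 < c) (ht : 0 ≤ t) :
    1 + t ≤ (1 + c⁻¹) * exp (c * t) := by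
  have h1 : 1 ≤ exp (c * t) := one_le_exp (by positivity)
  have h2 : c * t + 1 ≤ exp (c * t) := add_one_le_exp _
  have h3 : t ≤ c⁻¹ * exp (c * t) := by
    rw [inv_mul_eq_div, le_div_iff₀ hc]; linarith
  linarith

lemma exp_neg_mul_mul_one_add_le {h t : ℝ} (hh : 0 < h) (ht : 0 ≤ t) :
    exp (-h * t) * (1 + t) ≤ (1 + 2 / h) * exp (-(h / 2 * t)) := by
  have := one_add_le_mul_exp (half_pos hh) ht
  rw [inv_div] at this
  calc exp (-h * t) * (1 + t) ≤ exp (-h * t) * ((1 + 2 / h) * exp (h / 2 * t)) := by gcongr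
    _ = (1 + 2 / h) * exp (-(h / 2 * t)) := by
        rw [mul_left_comm, ← exp_add]; ring_nf

lemma exp_neg_mul_abs_mul_one_add_abs_div_norm_rpow_le {h p b : ℝ} (hh : 0 < h) (hp : 0 ≤ p)
    (hb0 : 0 ≤ b) (hb1 : b < 1) (x : ℝ) :
    exp (-h * |x|) * (1 + |x|) / ‖1 - (b : ℂ) * Complex.exp (Complex.I * x)‖ ^ p
      ≤ (1 + 2 / h) * (exp (-(h / 2 * |x|)) * max (1 - b) (|sin x| / 2) ^ (-p)) := by
  have hmax : 0 < max (1 - b) (|sin x| / 2) := lt_max_of_lt_left (by linarith)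
  rw [div_eq_mul_inv, ← rpow_neg (norm_nonneg _), ← mul_assoc]
  exact mul_le_mul (exp_neg_mul_mul_one_add_le hh (abs_nonneg x))
    (rpow_le_rpow_of_nonpos hmax (max_abs_sin_le_norm_one_sub_mul_exp hb0 x) (by linarith))
    (by positivity) (by positivity)

theorem integral_exp_decay_div_abs_pow (δ h : ℝ) (hδ : 0 < δ) (hh : 0 < h) :
    ∃ C > 0, ∀ b : ℝ, 0 < b → b < 1 →
      (∫ x : ℝ, Real.exp (-h * |x|) * (1 + |x|)
          / ‖1 - (b : ℂ) * Complex.exp (Complex.I * (x : ℂ))‖ ^ (1 + δ))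
        ≤ C / (1 - b) ^ δ := by
  set c := h / 2
  have hc : 0 < c := half_pos hh
  set S := ∑' k : ℤ, exp (-(c * π * |(k : ℝ)|))
  have hS : 0 < S := one_pos.trans_le (one_le_tsum_exp_neg_mul_abs_int (mul_pos hc pi_pos))
  refine ⟨(1 + 2 / h) * (exp (c * π) * S * (2 * 8 ^ (1 + δ) / δ)), by positivity,
    fun b hb0 hb1 => ?_⟩
  have ha : 0 < 1 - b := by linarith
  have hper := periodic_max_abs_sin_rpow (1 - b) (-(1 + δ))
  have hcont := continuous_max_abs_sin_rpow ha (-(1 + δ))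
  calc _ ≤ ∫ x, (1 + 2 / h) * (exp (-(c * |x|)) * max (1 - b) (|sin x| / 2) ^ (-(1 + δ))) :=
        integral_mono_of_nonneg (.of_forall fun x => by positivity)
          ((hper.integrable_exp_neg_mul_abs_mul pi_pos hc hcont).const_mul _)
          (.of_forall
            (exp_neg_mul_abs_mul_one_add_abs_div_norm_rpow_le hh (by linarith) hb0.le hb1))
    _ ≤ (1 + 2 / h) *
          (exp (c * π) * S * ∫ x in 0..π, max (1 - b) (|sin x| / 2) ^ (-(1 + δ))) := by
        rw [integral_const_mul]
        gcongr
        exact hper.integral_exp_neg_mul_abs_mul_le pi_pos hc hcont fun x => by positivity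
    _ ≤ (1 + 2 / h) * (exp (c * π) * S * (2 * 8 ^ (1 + δ) / δ * (1 - b) ^ (-δ))) := by
        gcongr
        exact integral_max_abs_sin_rpow_le ha hδ
    _ = _ := by rw [rpow_neg ha.le]; ring
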